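/- Let k, l be natural numbers, let x₀ ∈ X satisfy T^k(x₀) = T^l(x₀), and let f : X → ℂ be continuous. Then ⟨M̃_f S̃^k (S̃*)^l M̃_f e_{(x₀,l)}, e_{(x₀,k)}⟩ = f(x₀)²·(I_k(x₀)·I_l(x₀))^{-1/2}. Consequently, if moreover k ≠ l and f(x₀) ≠ 0, then M̃_f S̃^k (S̃*)^l M̃_f ≠ M̃_h for every continuous function h : X → ℂ (since ⟨M̃_h e_{(x₀,l)}, e_{(x₀,k)}⟩ = 0 when k ≠ l). -/

import Mathlib

open Classical

noncomputable section

/-- `ℓ²(X×ℤ)`: the Hilbert space of square-summable complex families indexed by `X × ℤ`. -/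
abbrev l2Z (X : Type*) : Type _ := lp (fun _ : X × ℤ => ℂ) 2

/-- The orthonormal basis vector `e_{(x,n)}` of `ℓ²(X×ℤ)`. -/
def e {X : Type*} (p : X × ℤ) : l2Z X := lp.single 2 p 1

/-- `I_k(x) = ∏_{j=1}^{k} ℒ(1)(T^j(x))`, where `ℒ(1)(x) = card (T⁻¹({x}))`
(with `I_0 = 1`). -/
def Ik {X : Type*} (T : X → X) (k : ℕ) (x : X) : ℝ :=
  ∏ j ∈ Finset.range k, (Nat.card (T ⁻¹' {T^[j + 1] x}) : ℝ)

end

/-!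
The adjoint of `S̃` walks down the orbit of `T`: `S̃* e_{(x,n)} = ℒ(1)(Tx)^{-1/2} e_{(Tx,n-1)}`,
hence `(S̃*)^j e_{(x,j)} = I_j(x)^{-1/2} e_{(T^j x, 0)}`. Moving `M̃_f S̃^k` across the inner
product, the entry pairs `(S̃*)^k M̃_f* e_{(x₀,k)}` with `(S̃*)^l M̃_f e_{(x₀,l)}`, which are
multiples of the same vector `e_{(T^k x₀, 0)} = e_{(T^l x₀, 0)}`. A multiplication operator is
diagonal, so its `((x₀,k),(x₀,l))` entry vanishes for `k ≠ l`, whereas the computed entry does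
not: the fibers of a covering map on a compact space are finite and, `T` being onto, nonempty,
so `I_k(x₀), I_l(x₀) > 0`.
-/

open ContinuousLinearMap

theorem IsCoveringMap.finite_preimage_singleton {E X : Type*} [TopologicalSpace E]
    [TopologicalSpace X] [CompactSpace E] [T1Space X] {f : E → X} (hf : IsCoveringMap f)
    (x : X) : (f ⁻¹' {x}).Finite :=
  (isClosed_singleton.preimage hf.continuous).isCompact.finite
    (isDiscrete_iff_discreteTopology.mpr (hf x).discreteTopology_fiber)

section BasisVectors

variable {X : Type*}

theorem e_apply (p q : X × ℤ) : e p q = if q = p then 1 else 0 := by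
  simp [e, lp.single_apply, Pi.single_apply]

theorem inner_e_left (p : X × ℤ) (u : l2Z X) : @inner ℂ _ _ (e p) u = u p := by
  simp [e, lp.inner_single_left]

theorem inner_e_e (p q : X × ℤ) : @inner ℂ _ _ (e p) (e q) = if p = q then 1 else 0 := by
  rw [inner_e_left, e_apply]

theorem finsum_mem_e_apply {s : Set X} (hs : s.Finite) (m : ℤ) (q : X × ℤ) :
    (∑ᶠ y ∈ s, e (y, m) : l2Z X) q = if q.1 ∈ s ∧ q.2 = m then 1 else 0 := by
  rw [finsum_mem_eq_finite_toFinset_sum _ hs, lp.coeFn_sum, Finset.sum_apply]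
  by_cases hm : q.2 = m
  · simp [e_apply, Prod.ext_iff, hm, eq_comm (a := q.1)]
  · simp [e_apply, Prod.ext_iff, hm]

theorem adjoint_apply_e_apply (A : l2Z X →L[ℂ] l2Z X) (p q : X × ℤ) :
    adjoint A (e p) q = starRingEnd ℂ (A (e q) p) := by
  rw [← inner_e_left, adjoint_inner_right, ← inner_conj_symm, inner_e_left]

theorem adjoint_apply_e_of_diagonal {A : l2Z X →L[ℂ] l2Z X} {d : X × ℤ → ℂ}
    (hA : ∀ p, A (e p) = d p • e p) (p : X × ℤ) :
    adjoint A (e p) = starRingEnd ℂ (d p) • e p := by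
  ext q
  rw [adjoint_apply_e_apply, hA, lp.coeFn_smul, lp.coeFn_smul]
  by_cases h : q = p
  · subst h; simp [e_apply]
  · simp [e_apply, h, Ne.symm h]

end BasisVectors

theorem Ik_succ {X : Type*} (T : X → X) (j : ℕ) (x : X) :
    Ik T (j + 1) x = Ik T j (T x) * Nat.card (T ⁻¹' {T x}) := by
  simp [Ik, Finset.prod_range_succ', Function.iterate_succ_apply]

theorem Ik_nonneg {X : Type*} (T : X → X) (j : ℕ) (x : X) : 0 ≤ Ik T j x :=
  Finset.prod_nonneg fun _ _ => Nat.cast_nonneg _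

theorem Ik_pos {X : Type*} {T : X → X} (hT : ∀ x, (T ⁻¹' {x}).Finite)
    (hTsurj : Function.Surjective T) (j : ℕ) (x : X) : 0 < Ik T j x := by
  refine Finset.prod_pos fun i _ => ?_
  have : Finite (T ⁻¹' {T^[i + 1] x}) := hT _
  have : Nonempty (T ⁻¹' {T^[i + 1] x}) :=
    (hTsurj.nonempty_preimage.mpr (Set.singleton_nonempty _)).to_subtype
  exact_mod_cast Nat.card_pos

section WeightedShift

variable {X : Type*}

def IsTransferShift (T : X → X) (St : l2Z X →L[ℂ] l2Z X) : Prop :=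
  ∀ (x : X) (n : ℤ), St (e (x, n)) =
    (((Real.sqrt (Nat.card (T ⁻¹' {x})))⁻¹ : ℝ) : ℂ) • ∑ᶠ y ∈ T ⁻¹' {x}, e (y, n + 1)

variable {T : X → X} {St : l2Z X →L[ℂ] l2Z X}

theorem adjoint_apply_e_of_shift (hT : ∀ x, (T ⁻¹' {x}).Finite)
    (hSt : IsTransferShift T St) (x : X) (n : ℤ) :
    adjoint St (e (x, n)) =
      (((Real.sqrt (Nat.card (T ⁻¹' {T x})))⁻¹ : ℝ) : ℂ) • e (T x, n - 1) := by
  ext ⟨z, m⟩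
  rw [adjoint_apply_e_apply, hSt, lp.coeFn_smul, lp.coeFn_smul, Pi.smul_apply, Pi.smul_apply,
    finsum_mem_e_apply (hT z), e_apply]
  by_cases h : T x = z ∧ n = m + 1
  · obtain ⟨rfl, rfl⟩ := h
    simp
  · simp only [Set.mem_preimage, Set.mem_singleton_iff] at h ⊢
    have h' : ¬(z = T x ∧ m = n - 1) := fun ⟨hz, hm⟩ => h ⟨hz.symm, by omega⟩
    simp [Prod.ext_iff, h, h']

theorem adjoint_pow_apply_e_of_shift (hT : ∀ x, (T ⁻¹' {x}).Finite)
    (hSt : IsTransferShift T St) (j : ℕ) (x : X) (n : ℤ) :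
    (adjoint St ^ j) (e (x, n)) = (((Real.sqrt (Ik T j x))⁻¹ : ℝ) : ℂ) • e (T^[j] x, n - j) := by
  induction j generalizing x n with
  | zero => simp [Ik]
  | succ j ih =>
    rw [pow_succ, mul_apply_eq_comp, adjoint_apply_e_of_shift hT hSt, map_smul, ih, smul_smul,
      Ik_succ, Real.sqrt_mul' _ (Nat.cast_nonneg _), mul_inv, mul_comm,
      ← Function.iterate_succ_apply, sub_sub, add_comm 1, Nat.cast_succ]
    norm_cast

theorem inner_e_mul_shift_pow_mul_adjoint_pow_mul (hT : ∀ x, (T ⁻¹' {x}).Finite)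
    (hSt : IsTransferShift T St)
    {f : X → ℂ} {Mf : l2Z X →L[ℂ] l2Z X} (hMf : ∀ p : X × ℤ, Mf (e p) = f p.1 • e p)
    {k l : ℕ} {x₀ : X} (hx₀ : T^[k] x₀ = T^[l] x₀) :
    @inner ℂ _ _ (e (x₀, (k : ℤ)))
        ((Mf ∘L (St ^ k) ∘L ((adjoint St) ^ l) ∘L Mf) (e (x₀, (l : ℤ)))) =
      f x₀ ^ 2 * (((Real.sqrt (Ik T k x₀ * Ik T l x₀))⁻¹ : ℝ) : ℂ) := by
  have hback : ∀ j : ℕ, (adjoint St ^ j) (e (x₀, j)) =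
      (((Real.sqrt (Ik T j x₀))⁻¹ : ℝ) : ℂ) • e (T^[j] x₀, 0) := fun j => by
    rw [adjoint_pow_apply_e_of_shift hT hSt, sub_self]
  have hadj_pow : adjoint (St ^ k) = adjoint St ^ k := by
    rw [← star_eq_adjoint, ← star_eq_adjoint, star_pow]
  calc @inner ℂ _ _ (e (x₀, (k : ℤ)))
        ((Mf ∘L (St ^ k) ∘L ((adjoint St) ^ l) ∘L Mf) (e (x₀, (l : ℤ))))
      = @inner ℂ _ _ ((adjoint St ^ k) (adjoint Mf (e (x₀, k))))
          ((adjoint St ^ l) (Mf (e (x₀, l)))) := by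
        rw [← hadj_pow, adjoint_inner_left, adjoint_inner_left]; rfl
    _ = f x₀ ^ 2 * (((Real.sqrt (Ik T k x₀ * Ik T l x₀))⁻¹ : ℝ) : ℂ) := by
        rw [adjoint_apply_e_of_diagonal hMf, hMf, map_smul, map_smul, hback, hback, hx₀,
          smul_smul, smul_smul, inner_smul_left, inner_smul_right, inner_e_e, if_pos rfl,
          Real.sqrt_mul' _ (Ik_nonneg T l x₀), mul_inv]
        simp only [map_mul, Complex.conj_conj, Complex.conj_ofReal]
        push_cast
        ring

end WeightedShift

open ContinuousLinearMap in
/-- Let `X` be a compact Hausdorff space, `T : X → X` a covering map and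
`S̃` the bounded operator on `ℓ²(X×ℤ)` with
`S̃ e_{(x,n)} = (ℒ(1)(x))^{-1/2} ∑_{y ∈ T⁻¹({x})} e_{(y,n+1)}`. Let `k, l ∈ ℕ`, let
`x₀ ∈ X` satisfy `T^k(x₀) = T^l(x₀)` and let `f : X → ℂ` be continuous. Then
`⟨M̃_f S̃^k (S̃*)^l M̃_f e_{(x₀,l)}, e_{(x₀,k)}⟩ = f(x₀)²·(I_k(x₀)·I_l(x₀))^{-1/2}`
(the paper's inner product is linear in the first variable, so it is rendered as
Mathlib's `inner` with arguments swapped). Consequently, if `k ≠ l` and `f(x₀) ≠ 0`, then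
`M̃_f S̃^k (S̃*)^l M̃_f ≠ M̃_h` for every continuous `h : X → ℂ`. -/
theorem off_diagonal_entry_and_not_multiplication {X : Type*} [TopologicalSpace X]
    [CompactSpace X] [T2Space X] (T : X → X) (hT : IsCoveringMap T)
    (hTsurj : Function.Surjective T)
    (St : l2Z X →L[ℂ] l2Z X)
    (hSt : ∀ (x : X) (n : ℤ), St (e (x, n)) =
      (((Real.sqrt (Nat.card (T ⁻¹' {x})))⁻¹ : ℝ) : ℂ) • ∑ᶠ y ∈ T ⁻¹' {x}, e (y, n + 1))
    (k l : ℕ) (x₀ : X) (hx₀ : T^[k] x₀ = T^[l] x₀)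
    (f : C(X, ℂ)) (Mf : l2Z X →L[ℂ] l2Z X)
    (hMf : ∀ p : X × ℤ, Mf (e p) = f p.1 • e p) :
    @inner ℂ _ _ (e (x₀, (k : ℤ)))
        ((Mf ∘L (St ^ k) ∘L ((adjoint St) ^ l) ∘L Mf) (e (x₀, (l : ℤ)))) =
      f x₀ ^ 2 * (((Real.sqrt (Ik T k x₀ * Ik T l x₀))⁻¹ : ℝ) : ℂ) ∧
    (k ≠ l → f x₀ ≠ 0 →
      ∀ h : C(X, ℂ), ∀ Mh : l2Z X →L[ℂ] l2Z X,
        (∀ p : X × ℤ, Mh (e p) = h p.1 • e p) →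
        Mf ∘L (St ^ k) ∘L ((adjoint St) ^ l) ∘L Mf ≠ Mh) := by
  have hfin := hT.finite_preimage_singleton
  have hentry := inner_e_mul_shift_pow_mul_adjoint_pow_mul hfin hSt hMf hx₀
  refine ⟨hentry, fun hkl hf h Mh hMh hMh_eq => ?_⟩
  have hentry_ne : f x₀ ^ 2 * (((Real.sqrt (Ik T k x₀ * Ik T l x₀))⁻¹ : ℝ) : ℂ) ≠ 0 :=
    mul_ne_zero (pow_ne_zero 2 hf) <| Complex.ofReal_ne_zero.mpr <| inv_ne_zero <|
      (Real.sqrt_pos.mpr (mul_pos (Ik_pos hfin hTsurj k x₀) (Ik_pos hfin hTsurj l x₀))).ne'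
  apply hentry_ne
  rw [← hentry, hMh_eq, hMh, inner_smul_right, inner_e_e, if_neg (by simpa using hkl), mul_zero]
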